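/- Let V : ℝ → ℝ be continuous with support contained in [-x₀, x₀], and let ψ₀, ψ̃₀ : ℝ → ℝ be C² solutions of -u'' + V u = 0 with Wronskian ψ₀ψ̃₀' - ψ₀'ψ̃₀ ≡ 1, where ψ₀ is constant on each of (-∞,-x₀] and [x₀,∞). Let f : ℝ → ℝ be continuous with support in [-x₀,x₀] and ∫_ℝ f ψ₀ = 0. Then u := S[f] defined by S[f](x) = ψ₀(x)∫_{-∞}^x f(t)ψ̃₀(t) dt + ψ̃₀(x)∫_x^{+∞} f(t)ψ₀(t) dt - (ψ₀(x)/2)∫_ℝ f(t)ψ̃₀(t) dt satisfies -u'' + V u = f on ℝ, and u is constant on each of (-∞,-x₀] and [x₀,∞). -/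
import Mathlib

open MeasureTheory Set intervalIntegral in
private lemma zero_on_Iic {c : ℝ} {f : ℝ → ℝ} (hf : Continuous f)
    (h : ∀ x < c, f x = 0) : ∀ x ≤ c, f x = 0 := by
  intro x hx
  rcases lt_or_eq_of_le hx with hlt | rfl
  · exact h x hlt
  · have h1 : Filter.Tendsto f (nhdsWithin x (Set.Iio x)) (nhds (f x)) :=
      (hf.tendsto x).mono_left nhdsWithin_le_nhds
    have h2 : Filter.Tendsto f (nhdsWithin x (Set.Iio x)) (nhds 0) := by
      refine Filter.Tendsto.congr' ?_ tendsto_const_nhds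
      filter_upwards [self_mem_nhdsWithin] with t ht
      exact (h t ht).symm
    exact tendsto_nhds_unique h1 h2

private lemma zero_on_Ici {c : ℝ} {f : ℝ → ℝ} (hf : Continuous f)
    (h : ∀ x, c < x → f x = 0) : ∀ x, c ≤ x → f x = 0 := by
  intro x hx
  have := zero_on_Iic (c := -c) (f := fun y => f (-y)) (hf.comp continuous_neg)
    (fun y hy => h (-y) (by linarith)) (-x) (by linarith)
  simpa using this

open MeasureTheory in
theorem S_solves_equation (x₀ : ℝ) (hx₀ : 0 < x₀) (V ψ₀ ψt : ℝ → ℝ)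
    (hV : Continuous V) (hVsupp : Function.support V ⊆ Set.Icc (-x₀) x₀)
    (hψ₀ : ContDiff ℝ 2 ψ₀) (hψt : ContDiff ℝ 2 ψt)
    (heq₀ : ∀ x, -(deriv (deriv ψ₀) x) + V x * ψ₀ x = 0)
    (heqt : ∀ x, -(deriv (deriv ψt) x) + V x * ψt x = 0)
    (hW : ∀ x, ψ₀ x * deriv ψt x - deriv ψ₀ x * ψt x = 1)
    (hconstm : ∀ x ≤ -x₀, ψ₀ x = ψ₀ (-x₀)) (hconstp : ∀ x, x₀ ≤ x → ψ₀ x = ψ₀ x₀)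
    (f : ℝ → ℝ) (hf : Continuous f) (hfsupp : Function.support f ⊆ Set.Icc (-x₀) x₀)
    (horth : (∫ t, f t * ψ₀ t) = 0)
    (u : ℝ → ℝ)
    (hu : ∀ x, u x = ψ₀ x * (∫ t in Set.Iic x, f t * ψt t)
        + ψt x * (∫ t in Set.Ici x, f t * ψ₀ t)
        - (ψ₀ x / 2) * ∫ t, f t * ψt t) :
    (∀ x, -(deriv (deriv u) x) + V x * u x = f x) ∧
    (∀ x ≤ -x₀, u x = u (-x₀)) ∧ (∀ x, x₀ ≤ x → u x = u x₀) := by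
  set a : ℝ := -x₀ - 1 with ha
  set g₁ : ℝ → ℝ := fun t => f t * ψt t with hg₁def
  set g₂ : ℝ → ℝ := fun t => f t * ψ₀ t with hg₂def
  set c : ℝ := ∫ t, g₁ t with hc
  -- f vanishes outside the open support window
  have hfm : ∀ x ≤ -x₀, f x = 0 := by
    refine zero_on_Iic hf (fun x hx => ?_)
    by_contra h
    have := hfsupp (Function.mem_support.mpr h)
    exact absurd this.1 (not_le.mpr hx)
  have hfp : ∀ x, x₀ ≤ x → f x = 0 := by
    refine zero_on_Ici hf (fun x hx => ?_)
    by_contra h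
    have := hfsupp (Function.mem_support.mpr h)
    exact absurd this.2 (not_le.mpr hx)
  have hg₁c : Continuous g₁ := hf.mul (hψt.continuous)
  have hg₂c : Continuous g₂ := hf.mul (hψ₀.continuous)
  have hg₁z : ∀ x ≤ -x₀, g₁ x = 0 := fun x hx => by simp [hg₁def, hfm x hx]
  have hg₂z : ∀ x ≤ -x₀, g₂ x = 0 := fun x hx => by simp [hg₂def, hfm x hx]
  have hg₁zp : ∀ x, x₀ ≤ x → g₁ x = 0 := fun x hx => by simp [hg₁def, hfp x hx]
  have hg₂zp : ∀ x, x₀ ≤ x → g₂ x = 0 := fun x hx => by simp [hg₂def, hfp x hx]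
  have hsupp₁ : Function.support g₁ ⊆ Set.Icc (-x₀) x₀ := by
    intro t ht
    simp only [hg₁def, Function.mem_support] at ht
    exact hfsupp (Function.mem_support.mpr (fun h => ht (by simp [h])))
  have hsupp₂ : Function.support g₂ ⊆ Set.Icc (-x₀) x₀ := by
    intro t ht
    simp only [hg₂def, Function.mem_support] at ht
    exact hfsupp (Function.mem_support.mpr (fun h => ht (by simp [h])))
  have hcs₁ : HasCompactSupport g₁ :=
    HasCompactSupport.intro isCompact_Icc (fun t ht => by
      by_contra h; exact ht (hsupp₁ (Function.mem_support.mpr h)))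
  have hcs₂ : HasCompactSupport g₂ :=
    HasCompactSupport.intro isCompact_Icc (fun t ht => by
      by_contra h; exact ht (hsupp₂ (Function.mem_support.mpr h)))
  have hint₁ : Integrable g₁ := hg₁c.integrable_of_hasCompactSupport hcs₁
  have hint₂ : Integrable g₂ := hg₂c.integrable_of_hasCompactSupport hcs₂
  -- rewrite the Iic-integrals as interval integrals from a
  have hIic₁ : ∀ x, (∫ t in Set.Iic x, g₁ t) = ∫ t in a..x, g₁ t := by
    intro x
    have h0 : (∫ t in Set.Iic a, g₁ t) = 0 :=
      setIntegral_eq_zero_of_forall_eq_zero (fun t ht => hg₁z t (le_trans ht (by simp only [ha]; linarith)))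
    have := intervalIntegral.integral_Iic_sub_Iic (hint₁.integrableOn) (hint₁.integrableOn) (a := a) (b := x) (μ := volume)
    rw [h0, sub_zero] at this
    exact this
  have hIic₂ : ∀ x, (∫ t in Set.Iic x, g₂ t) = ∫ t in a..x, g₂ t := by
    intro x
    have h0 : (∫ t in Set.Iic a, g₂ t) = 0 :=
      setIntegral_eq_zero_of_forall_eq_zero (fun t ht => hg₂z t (le_trans ht (by simp only [ha]; linarith)))
    have := intervalIntegral.integral_Iic_sub_Iic (hint₂.integrableOn) (hint₂.integrableOn) (a := a) (b := x) (μ := volume)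
    rw [h0, sub_zero] at this
    exact this
  have hIci₂ : ∀ x, (∫ t in Set.Ici x, g₂ t) = -∫ t in a..x, g₂ t := by
    intro x
    have hsum := intervalIntegral.integral_Iio_add_Ici (b := x) (μ := volume)
      (hint₂.integrableOn) (hint₂.integrableOn)
    have hIio : (∫ t in Set.Iio x, g₂ t) = ∫ t in a..x, g₂ t := by
      rw [← integral_Iic_eq_integral_Iio]; exact hIic₂ x
    have htot : (∫ t, g₂ t) = 0 := horth
    rw [hIio, htot] at hsum
    linarith
  -- the clean formula for u
  have hu2 : ∀ x, u x = ψ₀ x * (∫ t in a..x, g₁ t) - ψt x * (∫ t in a..x, g₂ t)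
      - (ψ₀ x / 2) * c := by
    intro x
    rw [hu x, hIic₁ x, hIci₂ x]
    ring
  -- differentiability facts
  have hdψ₀ : Differentiable ℝ ψ₀ := hψ₀.differentiable (by norm_num)
  have hdψt : Differentiable ℝ ψt := hψt.differentiable (by norm_num)
  have hψ₀' : ContDiff ℝ 1 (deriv ψ₀) := by
    have h2 : ContDiff ℝ (1 + 1 : ℕ) ψ₀ := by norm_num; exact hψ₀
    exact (contDiff_succ_iff_deriv.mp (by exact_mod_cast h2)).2.2
  have hψt' : ContDiff ℝ 1 (deriv ψt) := by
    have h2 : ContDiff ℝ (1 + 1 : ℕ) ψt := by norm_num; exact hψt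
    exact (contDiff_succ_iff_deriv.mp (by exact_mod_cast h2)).2.2
  have hdψ₀' : Differentiable ℝ (deriv ψ₀) := hψ₀'.differentiable (by norm_num)
  have hdψt' : Differentiable ℝ (deriv ψt) := hψt'.differentiable (by norm_num)
  -- derivatives of the interval integrals
  have hD₁ : ∀ x, HasDerivAt (fun y => ∫ t in a..y, g₁ t) (g₁ x) x := fun x =>
    intervalIntegral.integral_hasDerivAt_right (hint₁.intervalIntegrable)
      (hg₁c.stronglyMeasurable.stronglyMeasurableAtFilter) hg₁c.continuousAt
  have hD₂ : ∀ x, HasDerivAt (fun y => ∫ t in a..y, g₂ t) (g₂ x) x := fun x =>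
    intervalIntegral.integral_hasDerivAt_right (hint₂.intervalIntegrable)
      (hg₂c.stronglyMeasurable.stronglyMeasurableAtFilter) hg₂c.continuousAt
  -- first derivative of u
  have hu' : ∀ x, HasDerivAt u
      (deriv ψ₀ x * (∫ t in a..x, g₁ t) - deriv ψt x * (∫ t in a..x, g₂ t)
        - (deriv ψ₀ x / 2) * c) x := by
    intro x
    have h : HasDerivAt (fun y => ψ₀ y * (∫ t in a..y, g₁ t) - ψt y * (∫ t in a..y, g₂ t)
        - (ψ₀ y / 2) * c)
        ((deriv ψ₀ x * (∫ t in a..x, g₁ t) + ψ₀ x * g₁ x)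
         - (deriv ψt x * (∫ t in a..x, g₂ t) + ψt x * g₂ x)
         - (deriv ψ₀ x / 2) * c) x := by
      exact ((((hdψ₀ x).hasDerivAt.mul (hD₁ x)).sub
        ((hdψt x).hasDerivAt.mul (hD₂ x))).sub
        (((hdψ₀ x).hasDerivAt.div_const 2).mul_const c))
    have hcancel : (deriv ψ₀ x * (∫ t in a..x, g₁ t) + ψ₀ x * g₁ x)
         - (deriv ψt x * (∫ t in a..x, g₂ t) + ψt x * g₂ x)
         - (deriv ψ₀ x / 2) * c
        = deriv ψ₀ x * (∫ t in a..x, g₁ t) - deriv ψt x * (∫ t in a..x, g₂ t)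
        - (deriv ψ₀ x / 2) * c := by
      simp only [hg₁def, hg₂def]; ring
    rw [hcancel] at h
    exact h.congr_of_eventuallyEq (Filter.Eventually.of_forall (fun y => hu2 y))
  have hderiv_u : deriv u = fun x => deriv ψ₀ x * (∫ t in a..x, g₁ t)
      - deriv ψt x * (∫ t in a..x, g₂ t) - (deriv ψ₀ x / 2) * c := by
    funext x; exact (hu' x).deriv
  -- second derivative
  have hu'' : ∀ x, deriv (deriv u) x
      = deriv (deriv ψ₀) x * (∫ t in a..x, g₁ t) + deriv ψ₀ x * g₁ x
      - (deriv (deriv ψt) x * (∫ t in a..x, g₂ t) + deriv ψt x * g₂ x)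
      - (deriv (deriv ψ₀) x / 2) * c := by
    intro x
    rw [hderiv_u]
    have h : HasDerivAt (fun y => deriv ψ₀ y * (∫ t in a..y, g₁ t)
        - deriv ψt y * (∫ t in a..y, g₂ t) - (deriv ψ₀ y / 2) * c)
        (deriv (deriv ψ₀) x * (∫ t in a..x, g₁ t) + deriv ψ₀ x * g₁ x
         - (deriv (deriv ψt) x * (∫ t in a..x, g₂ t) + deriv ψt x * g₂ x)
         - (deriv (deriv ψ₀) x / 2) * c) x :=
      (((hdψ₀' x).hasDerivAt.mul (hD₁ x)).sub
        ((hdψt' x).hasDerivAt.mul (hD₂ x))).sub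
        (((hdψ₀' x).hasDerivAt.div_const 2).mul_const c)
    exact h.deriv
  refine ⟨?_, ?_, ?_⟩
  · -- the equation
    intro x
    rw [hu'' x, hu2 x]
    have e₀ := heq₀ x
    have et := heqt x
    have w := hW x
    simp only [hg₁def, hg₂def]
    linear_combination ((∫ t in a..x, f t * ψt t) - c/2) * e₀
      - (∫ t in a..x, f t * ψ₀ t) * et + f x * w
  · -- constant on the left
    intro x hx
    have hz₁ : ∀ y, y ≤ -x₀ → (∫ t in a..y, g₁ t) = 0 := by
      intro y hy
      rw [intervalIntegral.integral_congr (g := fun _ => (0:ℝ)) ?_, intervalIntegral.integral_zero]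
      intro t ht
      rcases Set.mem_uIcc.mp ht with h | h
      · exact hg₁z t (le_trans h.2 hy)
      · exact hg₁z t (le_trans h.2 (by simp only [ha]; linarith))
    have hz₂ : ∀ y, y ≤ -x₀ → (∫ t in a..y, g₂ t) = 0 := by
      intro y hy
      rw [intervalIntegral.integral_congr (g := fun _ => (0:ℝ)) ?_, intervalIntegral.integral_zero]
      intro t ht
      rcases Set.mem_uIcc.mp ht with h | h
      · exact hg₂z t (le_trans h.2 hy)
      · exact hg₂z t (le_trans h.2 (by simp only [ha]; linarith))
    rw [hu2 x, hu2 (-x₀), hz₁ x hx, hz₁ (-x₀) le_rfl, hz₂ x hx, hz₂ (-x₀) le_rfl,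
      hconstm x hx]
    ring
  · -- constant on the right
    intro x hx
    have hF₁ : ∀ y, x₀ ≤ y → (∫ t in a..y, g₁ t) = c := by
      intro y hy
      rw [intervalIntegral.integral_eq_integral_of_support_subset]
      intro t ht
      have := hsupp₁ ht
      exact ⟨by simp only [ha]; linarith [this.1], le_trans this.2 hy⟩
    have hF₂ : ∀ y, x₀ ≤ y → (∫ t in a..y, g₂ t) = 0 := by
      intro y hy
      rw [intervalIntegral.integral_eq_integral_of_support_subset]
      · exact horth
      intro t ht
      have := hsupp₂ ht
      exact ⟨by simp only [ha]; linarith [this.1], le_trans this.2 hy⟩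
    rw [hu2 x, hu2 x₀, hF₁ x hx, hF₁ x₀ le_rfl, hF₂ x hx, hF₂ x₀ le_rfl, hconstp x hx]
    ring
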